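/- Pareto characterization of maximum allocations (essence of Lemma 1): a feasible allocation π satisfies Z(π) = Z_max if and only if there is no feasible allocation π' with ω(π) k ≤ ω(π') k for every company k and ω(π) ≠ ω(π'). -/

import Mathlib

/-- A feasible allocation: every assigned triple was bid on, every job is
assigned at most once, and capacities are respected. -/
def Feasible {J T K : Type*} [DecidableEq J] [DecidableEq T] [DecidableEq K]
    (b : J → T → K → Prop) (n : K → T → ℕ) (π : Finset (J × T × K)) : Prop :=
  (∀ x ∈ π, b x.1 x.2.1 x.2.2) ∧
  (∀ j : J, (π.filter (fun x => x.1 = j)).card ≤ 1) ∧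
  (∀ (k : K) (t : T), (π.filter (fun x => x.2.1 = t ∧ x.2.2 = k)).card ≤ n k t)

/-- Number of jobs a company `k` receives in allocation `π`. -/
def alloc {J T K : Type*} [DecidableEq K]
    (π : Finset (J × T × K)) (k : K) : ℕ :=
  (π.filter (fun x => x.2.2 = k)).card

/-- Total compensation of an allocation. -/
def cost {J T K : Type*} (c : J → T → K → ℕ) (π : Finset (J × T × K)) : ℕ :=
  ∑ x ∈ π, c x.1 x.2.1 x.2.2

/-- The maximum number of allocatable jobs. -/
noncomputable def Zmax {J T K : Type*} [DecidableEq J] [DecidableEq T] [DecidableEq K]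
    (b : J → T → K → Prop) (n : K → T → ℕ) : ℕ :=
  sSup {z | ∃ π : Finset (J × T × K), Feasible b n π ∧ π.card = z}

/-- The allocation vector of `π` sorted in nondecreasing order. -/
def sortedVec {J T K : Type*} [Fintype K] [DecidableEq K]
    (π : Finset (J × T × K)) : List ℕ :=
  Multiset.sort (Finset.univ.val.map (fun k => alloc π k)) (· ≤ ·)

/-- `π` is a max-lexmin fair maximum allocation. -/
noncomputable def MaxLexminFair {J T K : Type*} [Fintype K]
    [DecidableEq J] [DecidableEq T] [DecidableEq K]
    (b : J → T → K → Prop) (n : K → T → ℕ) (π : Finset (J × T × K)) : Prop :=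
  Feasible b n π ∧ π.card = Zmax b n ∧
    ∀ π' : Finset (J × T × K), Feasible b n π' → π'.card = Zmax b n →
      sortedVec π' = sortedVec π ∨ List.Lex (· < ·) (sortedVec π') (sortedVec π)

/-! A strictly dominating allocation vector has a strictly larger sum, hence allocates more jobs.
Conversely, let σ allocate more jobs than π. Some job of σ, say at slot (t, k), is unassigned in
π. If π has room at (t, k), inserting it strictly raises ω(π) k. Otherwise the slot is full in π,
and since σ respects the same capacity, π has a triple at (t, k) outside σ; swapping it for the
job of σ keeps ω(π) and brings π one step closer to σ, so induction on |σ \ π| concludes. -/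

open Finset

theorem card_sdiff_insert_erase_lt {α : Type*} [DecidableEq α] {s t : Finset α} {x y : α}
    (hxs : x ∈ s) (hxt : x ∉ t) (hys : y ∉ s) : #(s \ insert x (t.erase y)) < #(s \ t) := by
  have hsdiff : s \ t.erase y = s \ t := by
    ext z
    by_cases hz : z = y <;> simp_all
  rw [sdiff_insert, hsdiff]
  exact card_erase_lt_of_mem (mem_sdiff.2 ⟨hxs, hxt⟩)

section

variable {J T K : Type*} {π σ : Finset (J × T × K)}

def slotLoad [DecidableEq T] [DecidableEq K] (π : Finset (J × T × K)) (t : T) (k : K) : ℕ :=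
  #(π.filter fun x => x.2.1 = t ∧ x.2.2 = k)

section alloc

variable [DecidableEq K]

theorem card_eq_sum_alloc [Fintype K] (π : Finset (J × T × K)) : #π = ∑ k, alloc π k :=
  card_eq_sum_card_fiberwise fun x _ => mem_univ x.2.2

theorem card_lt_card_of_alloc_lt [Fintype K] (h : alloc π < alloc σ) : #π < #σ := by
  obtain ⟨hle, k, hk⟩ := Pi.lt_def.1 h
  rw [card_eq_sum_alloc, card_eq_sum_alloc]
  exact sum_lt_sum (fun i _ => hle i) ⟨k, mem_univ k, hk⟩

variable [DecidableEq J] [DecidableEq T]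

theorem alloc_insert {x : J × T × K} (hx : x ∉ π) (k : K) :
    alloc (insert x π) k = alloc π k + if x.2.2 = k then 1 else 0 := by
  unfold alloc
  rw [filter_insert]
  split_ifs
  · exact card_insert_of_notMem fun h => hx (mem_filter.1 h).1
  · rfl

theorem alloc_erase_add {x : J × T × K} (hx : x ∈ π) (k : K) :
    alloc (π.erase x) k + (if x.2.2 = k then 1 else 0) = alloc π k := by
  unfold alloc
  rw [filter_erase]
  split_ifs with hk
  · exact card_erase_add_one (mem_filter.2 ⟨hx, hk⟩)
  · rw [add_zero, erase_eq_of_notMem]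
    exact fun h => hk (mem_filter.1 h).2

theorem alloc_lt_alloc_insert {x : J × T × K} (hx : x ∉ π) : alloc π < alloc (insert x π) :=
  Pi.lt_def.2 ⟨fun k => (alloc_insert hx k).symm ▸ Nat.le_add_right _ _, x.2.2,
    by simp [alloc_insert hx]⟩

theorem alloc_insert_erase {x y : J × T × K} (hx : x ∉ π) (hy : y ∈ π) (hk : x.2.2 = y.2.2) :
    alloc (insert x (π.erase y)) = alloc π := by
  funext k
  rw [alloc_insert fun h => hx (mem_of_mem_erase h), hk, ← alloc_erase_add hy k]

end alloc

variable [DecidableEq J] [DecidableEq T] [DecidableEq K] {b : J → T → K → Prop} {n : K → T → ℕ}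

namespace Feasible

theorem empty : Feasible b n (∅ : Finset (J × T × K)) :=
  ⟨by simp, fun _ => by simp, fun _ _ => by simp⟩

theorem subset (hπ : Feasible b n π) (h : σ ⊆ π) : Feasible b n σ :=
  ⟨fun x hx => hπ.1 x (h hx),
    fun j => (card_le_card (filter_subset_filter _ h)).trans (hπ.2.1 j),
    fun k t => (card_le_card (filter_subset_filter _ h)).trans (hπ.2.2 k t)⟩

theorem slotLoad_le (hπ : Feasible b n π) (t : T) (k : K) : slotLoad π t k ≤ n k t :=
  hπ.2.2 k t

theorem injOn_fst (hπ : Feasible b n π) : Set.InjOn Prod.fst (π : Set (J × T × K)) :=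
  fun x hx y hy hxy =>
    card_le_one.1 (hπ.2.1 x.1) x (mem_filter.2 ⟨hx, rfl⟩) y (mem_filter.2 ⟨hy, hxy.symm⟩)

theorem card_le_card_jobs [Fintype J] (hπ : Feasible b n π) : #π ≤ Fintype.card J :=
  card_image_of_injOn hπ.injOn_fst ▸ card_le_univ _

theorem exists_mem_forall_fst_ne (hπ : Feasible b n π) (hσ : Feasible b n σ)
    (hlt : #π < #σ) : ∃ x ∈ σ, ∀ y ∈ π, y.1 ≠ x.1 := by
  rw [← card_image_of_injOn hπ.injOn_fst, ← card_image_of_injOn hσ.injOn_fst] at hlt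
  obtain ⟨j, hjσ, hjπ⟩ := exists_mem_notMem_of_card_lt_card hlt
  obtain ⟨x, hx, rfl⟩ := mem_image.1 hjσ
  exact ⟨x, hx, fun y hy hyx => hjπ (mem_image.2 ⟨y, hy, hyx⟩)⟩

theorem insert_of_slotLoad_lt (hπ : Feasible b n π) {x : J × T × K} (hb : b x.1 x.2.1 x.2.2)
    (hjob : ∀ y ∈ π, y.1 ≠ x.1) (hroom : slotLoad π x.2.1 x.2.2 < n x.2.2 x.2.1) :
    Feasible b n (insert x π) := by
  refine ⟨forall_mem_insert _ _ _ |>.2 ⟨hb, hπ.1⟩, fun j => ?_, fun k t => ?_⟩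
  · rw [filter_insert]
    split_ifs with hj
    · rw [filter_eq_empty_iff.2 fun y hy hyj => hjob y hy (hyj.trans hj.symm)]
      simp
    · exact hπ.2.1 j
  · rw [filter_insert]
    split_ifs with hslot
    · obtain ⟨rfl, rfl⟩ := hslot
      exact (card_insert_le _ _).trans hroom
    · exact hπ.2.2 k t

theorem slotLoad_erase_lt (hπ : Feasible b n π) {x : J × T × K} (hx : x ∈ π) :
    slotLoad (π.erase x) x.2.1 x.2.2 < n x.2.2 x.2.1 := by
  have hmem : x ∈ π.filter fun y => y.2.1 = x.2.1 ∧ y.2.2 = x.2.2 := mem_filter.2 ⟨hx, rfl, rfl⟩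
  have hpos : 0 < slotLoad π x.2.1 x.2.2 := card_pos.2 ⟨x, hmem⟩
  have hle := hπ.slotLoad_le x.2.1 x.2.2
  rw [slotLoad, filter_erase, card_erase_of_mem hmem]
  exact (Nat.sub_lt hpos one_pos).trans_le hle

theorem insert_erase (hπ : Feasible b n π) {x y : J × T × K} (hb : b x.1 x.2.1 x.2.2)
    (hjob : ∀ z ∈ π, z.1 ≠ x.1) (hy : y ∈ π) (hslot : y.2 = x.2) :
    Feasible b n (insert x (π.erase y)) :=
  (hπ.subset (erase_subset y π)).insert_of_slotLoad_lt hb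
    (fun z hz => hjob z (mem_of_mem_erase hz)) (hslot ▸ hπ.slotLoad_erase_lt hy)

theorem exists_mem_notMem_of_slotLoad_ge (hσ : Feasible b n σ) {x : J × T × K} (hxσ : x ∈ σ)
    (hxπ : x ∉ π) (hfull : n x.2.2 x.2.1 ≤ slotLoad π x.2.1 x.2.2) :
    ∃ y ∈ π, y ∉ σ ∧ y.2 = x.2 := by
  by_contra! h
  have hsub : insert x (π.filter fun y => y.2.1 = x.2.1 ∧ y.2.2 = x.2.2) ⊆
      σ.filter fun y => y.2.1 = x.2.1 ∧ y.2.2 = x.2.2 := by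
    refine insert_subset (mem_filter.2 ⟨hxσ, rfl, rfl⟩) fun y hy => ?_
    obtain ⟨hyπ, hyt, hyk⟩ := mem_filter.1 hy
    by_contra hyσ
    exact h y hyπ (fun h' => hyσ (mem_filter.2 ⟨h', hyt, hyk⟩)) (Prod.ext hyt hyk)
  have hcard := card_le_card hsub
  rw [card_insert_of_notMem fun h => hxπ (mem_filter.1 h).1] at hcard
  have := hσ.slotLoad_le x.2.1 x.2.2
  simp only [slotLoad] at hfull this
  omega

end Feasible

theorem exists_alloc_lt_of_card_lt [Fintype K] (hπ : Feasible b n π) (hσ : Feasible b n σ)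
    (hlt : #π < #σ) : ∃ π', Feasible b n π' ∧ alloc π < alloc π' := by
  induction hd : #(σ \ π) using Nat.strong_induction_on generalizing π with
  | _ d ih =>
  obtain ⟨x, hxσ, hjob⟩ := hπ.exists_mem_forall_fst_ne hσ hlt
  have hxπ : x ∉ π := fun h => hjob x h rfl
  by_cases hroom : slotLoad π x.2.1 x.2.2 < n x.2.2 x.2.1
  · exact ⟨insert x π, hπ.insert_of_slotLoad_lt (hσ.1 x hxσ) hjob hroom,
      alloc_lt_alloc_insert hxπ⟩
  obtain ⟨y, hyπ, hyσ, hslot⟩ := hσ.exists_mem_notMem_of_slotLoad_ge hxσ hxπ (not_lt.1 hroom)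
  have halloc := alloc_insert_erase hxπ hyπ (congrArg Prod.snd hslot).symm
  have hcard : #(insert x (π.erase y)) = #π := by
    rw [card_eq_sum_alloc, halloc, ← card_eq_sum_alloc]
  obtain ⟨π', hπ', hlt'⟩ := ih _ (hd ▸ card_sdiff_insert_erase_lt hxσ hxπ hyσ)
    (hπ.insert_erase (hσ.1 x hxσ) hjob hyπ hslot) (hcard ▸ hlt) rfl
  exact ⟨π', hπ', halloc ▸ hlt'⟩

section Zmax

variable [Fintype J] (b n)

theorem bddAbove_card_feasible :
    BddAbove {z | ∃ π : Finset (J × T × K), Feasible b n π ∧ #π = z} :=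
  ⟨Fintype.card J, by rintro _ ⟨π, hπ, rfl⟩; exact hπ.card_le_card_jobs⟩

theorem exists_feasible_card_eq_Zmax :
    ∃ π : Finset (J × T × K), Feasible b n π ∧ #π = Zmax b n :=
  Nat.sSup_mem (s := {z | ∃ π : Finset (J × T × K), Feasible b n π ∧ #π = z})
    ⟨0, ∅, .empty, card_empty⟩ (bddAbove_card_feasible b n)

variable {b n}

theorem Feasible.card_le_Zmax (hπ : Feasible b n π) : #π ≤ Zmax b n :=
  le_csSup (bddAbove_card_feasible b n) ⟨π, hπ, rfl⟩

end Zmax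

end

theorem maximum_iff_pareto_general {J T K : Type*}
    [Fintype J] [Fintype K]
    [DecidableEq J] [DecidableEq T] [DecidableEq K]
    (b : J → T → K → Prop) (n : K → T → ℕ) (π : Finset (J × T × K))
    (hfeas : Feasible b n π) :
    π.card = Zmax b n ↔
      ¬ ∃ π' : Finset (J × T × K), Feasible b n π' ∧
        (∀ k : K, alloc π k ≤ alloc π' k) ∧ alloc π ≠ alloc π' := by
  simp only [← Pi.le_def, ← lt_iff_le_and_ne]
  constructor
  · rintro hmax ⟨π', hπ', hlt⟩
    exact (card_lt_card_of_alloc_lt hlt).not_ge (hmax ▸ hπ'.card_le_Zmax)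
  · intro hpareto
    by_contra hne
    obtain ⟨σ, hσ, hσZ⟩ := exists_feasible_card_eq_Zmax b n
    exact hpareto (exists_alloc_lt_of_card_lt hfeas hσ
      (hσZ ▸ hfeas.card_le_Zmax.lt_of_ne hne))

/-- Pareto characterization of maximum allocations: a feasible
allocation is maximum iff no feasible allocation pointwise dominates its
allocation vector with a different allocation vector. -/
theorem maximum_iff_pareto {J T K : Type*}
    [Fintype J] [Fintype T] [Fintype K] [Nonempty J] [Nonempty T] [Nonempty K]
    [DecidableEq J] [DecidableEq T] [DecidableEq K]
    (b : J → T → K → Prop) (n : K → T → ℕ) (π : Finset (J × T × K))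
    (hfeas : Feasible b n π) :
    π.card = Zmax b n ↔
      ¬ ∃ π' : Finset (J × T × K), Feasible b n π' ∧
        (∀ k : K, alloc π k ≤ alloc π' k) ∧ alloc π ≠ alloc π' :=
  maximum_iff_pareto_general b n π hfeas
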